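/- arXiv:1708.02364 — 2 statements merged into one kernel-verified Lean document; each statement's English description precedes it below -/
import Mathlib

section
/- Let R be a commutative ring and S a semicontent R-algebra. If f ∈ S has locally principal content c(f) (i.e., c(f)·R_m is principal for every maximal ideal m of R), then f is Gaussian: c(fg) = c(f)·c(g) for all g ∈ S. -/
/-!
Work locally at a maximal ideal `m`, writing `c` for the content. There `c(f)` is generated
by the image of some `a ∈ R`, and since `f ∈ c(f)S` we get `u f = a h` for some `u ∉ m` and
`h ∈ S`. Flatness gives `a c(g) ⊆ c(a g)`, and hence also that multiplying by `u` does not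
change `c` after localizing. If `c(h)` localizes to the unit ideal, the semicontent property
gives `c(fg) = c(u f g) = c(h · a g) = c(a g) ⊇ a c(g) = c(f) c(g)` in `R_m`. Otherwise
`(a) = c(u f) = c(a h) ⊆ a c(h) ⊆ a m` in `R_m`, so `a = 0` there by Nakayama. The reverse
inclusion `c(fg) ⊆ c(f) c(g)` holds in every Ohm-Rush algebra.
-/

/-- The Ohm-Rush content of `f ∈ M`: the intersection of all ideals `I` of `R`
with `f ∈ I·M`. -/
noncomputable def ohmRushContent (R : Type*) {M : Type*} [CommRing R] [AddCommGroup M]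
    [Module R M] (f : M) : Ideal R :=
  sInf {I : Ideal R | f ∈ I • (⊤ : Submodule R M)}

/-- `M` is an Ohm-Rush module if `f ∈ c(f)·M` for every `f ∈ M`. -/
def IsOhmRush (R M : Type*) [CommRing R] [AddCommGroup M] [Module R M] : Prop :=
  ∀ f : M, f ∈ ohmRushContent R f • (⊤ : Submodule R M)

/-- `S` is a semicontent `R`-algebra: a faithfully flat Ohm-Rush algebra such that
for every multiplicative subset `W` of `R` and all `f, g ∈ S` with `c(f)_W = R_W`,
one has `c(fg)_W = c(g)_W`. -/
def IsSemicontentAlgebra (R S : Type*) [CommRing R] [CommRing S] [Algebra R S] : Prop :=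
  Module.FaithfullyFlat R S ∧ IsOhmRush R S ∧
    ∀ (W : Submonoid R) (f g : S),
      Ideal.map (algebraMap R (Localization W)) (ohmRushContent R f) = ⊤ →
      Ideal.map (algebraMap R (Localization W)) (ohmRushContent R (f * g)) =
        Ideal.map (algebraMap R (Localization W)) (ohmRushContent R g)

/-- `f` is a Gaussian element: `c(fg) = c(f)·c(g)` for all `g ∈ S`. -/
def IsGaussianElement (R : Type*) {S : Type*} [CommRing R] [CommRing S] [Algebra R S]
    (f : S) : Prop :=
  ∀ g : S, ohmRushContent R (f * g) = ohmRushContent R f * ohmRushContent R g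

theorem IsLocalization.exists_eq_span_singleton_algebraMap {R : Type*} [CommRing R]
    (W : Submonoid R) {L : Type*} [CommRing L] [Algebra R L] [IsLocalization W L]
    {J : Ideal L} (hJ : J.IsPrincipal) :
    ∃ a : R, J = Ideal.span {algebraMap R L a} := by
  obtain ⟨x, hx⟩ := hJ
  obtain ⟨⟨a, s⟩, rfl⟩ := IsLocalization.mk'_surjective W x
  refine ⟨a, ?_⟩
  rw [hx, Ideal.submodule_span_eq, ← IsLocalization.mk'_spec L a s,
    Ideal.span_singleton_mul_right_unit (IsLocalization.map_units L s)]

section Module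

variable {R M : Type*} [CommRing R] [AddCommGroup M] [Module R M]

theorem ohmRushContent_le {I : Ideal R} {x : M} (h : x ∈ I • (⊤ : Submodule R M)) :
    ohmRushContent R x ≤ I :=
  sInf_le h

theorem IsOhmRush.ohmRushContent_smul_le (hM : IsOhmRush R M) (a : R) (x : M) :
    ohmRushContent R (a • x) ≤ ohmRushContent R x :=
  ohmRushContent_le (Submodule.smul_of_tower_mem _ a (hM x))

theorem IsOhmRush.ohmRushContent_smul_le_span_singleton_mul (hM : IsOhmRush R M) (a : R)
    (x : M) :
    ohmRushContent R (a • x) ≤ Ideal.span {a} * ohmRushContent R x := by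
  refine ohmRushContent_le ?_
  rw [Submodule.mul_smul]
  exact Submodule.smul_mem_smul (Ideal.mem_span_singleton_self a) (hM x)

/- Tensor the exact sequence `0 → (I : a) → R → R ⧸ I`, `r ↦ r a`, with `M`. -/
theorem Module.Flat.mem_colon_smul_top_of_smul_mem [Module.Flat R M] {I : Ideal R} {a : R}
    {x : M} (h : a • x ∈ I • (⊤ : Submodule R M)) :
    x ∈ I.colon {a} • (⊤ : Submodule R M) := by
  set φ : R →ₗ[R] R ⧸ I := I.mkQ ∘ₗ LinearMap.toSpanSingleton R R a
  have hker : LinearMap.ker φ = I.colon {a} := by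
    ext r
    simp only [φ, LinearMap.mem_ker, LinearMap.comp_apply, LinearMap.toSpanSingleton_apply,
      smul_eq_mul, Submodule.mkQ_apply, Ideal.Quotient.mk_eq_mk, Ideal.Quotient.eq_zero_iff_mem,
      Submodule.mem_colon_singleton]
  have hφ : φ.rTensor M ((1 : R) ⊗ₜ x) = 0 := by
    apply (TensorProduct.quotTensorEquivQuotSMul M I).injective
    simpa [φ, TensorProduct.quotTensorEquivQuotSMul_mk_tmul, ← Submodule.Quotient.mk_smul,
      Submodule.Quotient.mk_eq_zero] using h
  obtain ⟨y, hy⟩ := (Module.Flat.rTensor_exact M (LinearMap.exact_subtype_ker_map φ) _).mp hφ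
  rw [← hker, ← Ideal.subtype_rTensor_range]
  exact ⟨y, by simp [hy]⟩

theorem span_singleton_mul_ohmRushContent_le [Module.Flat R M] (a : R) (x : M) :
    Ideal.span {a} * ohmRushContent R x ≤ ohmRushContent R (a • x) := by
  refine le_sInf fun I hI => Ideal.span_singleton_mul_le_iff.mpr fun b hb => ?_
  have hb := ohmRushContent_le (Module.Flat.mem_colon_smul_top_of_smul_mem hI) hb
  simpa [mul_comm] using Submodule.mem_colon_singleton.mp hb

variable (W : Submonoid R) (L : Type*) [CommRing L] [Algebra R L] [IsLocalization W L]

theorem IsOhmRush.map_ohmRushContent_smul_of_mem [Module.Flat R M] (hM : IsOhmRush R M)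
    {u : R} (hu : u ∈ W) (x : M) :
    (ohmRushContent R (u • x)).map (algebraMap R L) =
      (ohmRushContent R x).map (algebraMap R L) := by
  refine le_antisymm (Ideal.map_mono (hM.ohmRushContent_smul_le u x)) ?_
  calc (ohmRushContent R x).map (algebraMap R L)
      = (Ideal.span {u} * ohmRushContent R x).map (algebraMap R L) := by
        rw [Ideal.map_mul, Ideal.map_span, Set.image_singleton,
          Ideal.span_singleton_eq_top.mpr (IsLocalization.map_units L ⟨u, hu⟩), Ideal.top_mul]
    _ ≤ _ := Ideal.map_mono (span_singleton_mul_ohmRushContent_le u x)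

theorem exists_smul_mem_smul_top_of_map_le {I J : Ideal R}
    (hIJ : I.map (algebraMap R L) ≤ J.map (algebraMap R L)) {x : M}
    (hx : x ∈ I • (⊤ : Submodule R M)) :
    ∃ w ∈ W, w • x ∈ J • (⊤ : Submodule R M) := by
  refine Submodule.smul_induction_on hx (fun b hb y _ => ?_) (fun y z hy hz => ?_)
  · obtain ⟨w, hw, hwb⟩ := (IsLocalization.algebraMap_mem_map_algebraMap_iff W L J b).mp
      (hIJ (Ideal.mem_map_of_mem _ hb))
    exact ⟨w, hw, by rw [smul_smul]; exact Submodule.smul_mem_smul hwb trivial⟩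
  · obtain ⟨v, hv, hvy⟩ := hy
    obtain ⟨w, hw, hwz⟩ := hz
    refine ⟨v * w, mul_mem hv hw, ?_⟩
    rw [smul_add, mul_comm, mul_smul, mul_comm, mul_smul]
    exact add_mem (Submodule.smul_of_tower_mem _ w hvy) (Submodule.smul_of_tower_mem _ v hwz)

theorem IsOhmRush.exists_smul_eq_smul_of_map_eq_span_singleton (hM : IsOhmRush R M) {x : M}
    {a : R} (hx : (ohmRushContent R x).map (algebraMap R L) = Ideal.span {algebraMap R L a}) :
    ∃ u ∈ W, ∃ y : M, u • x = a • y := by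
  have hle :
      (ohmRushContent R x).map (algebraMap R L) ≤ (Ideal.span {a}).map (algebraMap R L) := by
    rw [hx, Ideal.map_span, Set.image_singleton]
  obtain ⟨u, hu, hux⟩ := exists_smul_mem_smul_top_of_map_le W L hle (hM x)
  rw [Submodule.ideal_span_singleton_smul, Submodule.mem_smul_pointwise_iff_exists] at hux
  obtain ⟨y, -, hy⟩ := hux
  exact ⟨u, hu, y, hy.symm⟩

end Module

section Algebra

variable {R S : Type*} [CommRing R] [CommRing S] [Algebra R S]

theorem IsOhmRush.ohmRushContent_mul_le (hS : IsOhmRush R S) (f g : S) :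
    ohmRushContent R (f * g) ≤ ohmRushContent R f * ohmRushContent R g := by
  refine ohmRushContent_le ?_
  have hf := hS f
  have hg := hS g
  rw [Ideal.smul_top_eq_map] at hf hg ⊢
  rw [Ideal.map_mul]
  exact Ideal.mul_mem_mul hf hg

theorem IsSemicontentAlgebra.map_ohmRushContent_mul_le (hS : IsSemicontentAlgebra R S)
    (p : Ideal R) [p.IsPrime] {f : S} (g : S)
    (hf : ((ohmRushContent R f).map (algebraMap R (Localization.AtPrime p))).IsPrincipal) :
    (ohmRushContent R f).map (algebraMap R (Localization.AtPrime p)) *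
        (ohmRushContent R g).map (algebraMap R (Localization.AtPrime p)) ≤
      (ohmRushContent R (f * g)).map (algebraMap R (Localization.AtPrime p)) := by
  obtain ⟨hflat, hOR, hsemi⟩ := hS
  have := hflat.toFlat
  set L := Localization.AtPrime p
  have hspan (r : R) :
      (Ideal.span {r}).map (algebraMap R L) = Ideal.span {algebraMap R L r} := by
    rw [Ideal.map_span, Set.image_singleton]
  obtain ⟨a, hfa⟩ := IsLocalization.exists_eq_span_singleton_algebraMap p.primeCompl hf
  obtain ⟨u, hu, h, hh⟩ := hOR.exists_smul_eq_smul_of_map_eq_span_singleton p.primeCompl L hfa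
  by_cases htop : (ohmRushContent R h).map (algebraMap R L) = ⊤
  · calc (ohmRushContent R f).map (algebraMap R L) * (ohmRushContent R g).map (algebraMap R L)
        = (Ideal.span {a} * ohmRushContent R g).map (algebraMap R L) := by
          rw [hfa, Ideal.map_mul, hspan]
      _ ≤ (ohmRushContent R (a • g)).map (algebraMap R L) :=
          Ideal.map_mono (span_singleton_mul_ohmRushContent_le a g)
      _ = (ohmRushContent R (h * (a • g))).map (algebraMap R L) :=
          (hsemi p.primeCompl h (a • g) htop).symm
      _ = (ohmRushContent R (u • (f * g))).map (algebraMap R L) := by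
          rw [mul_smul_comm, ← smul_mul_assoc u, hh, smul_mul_assoc]
      _ = (ohmRushContent R (f * g)).map (algebraMap R L) :=
          hOR.map_ohmRushContent_smul_of_mem p.primeCompl L hu (f * g)
  · have hle : Ideal.span {algebraMap R L a} ≤
        IsLocalRing.maximalIdeal L • Ideal.span {algebraMap R L a} :=
      calc Ideal.span {algebraMap R L a}
          = (ohmRushContent R (u • f)).map (algebraMap R L) := by
            rw [hOR.map_ohmRushContent_smul_of_mem p.primeCompl L hu f, hfa]
        _ ≤ (Ideal.span {a} * ohmRushContent R h).map (algebraMap R L) := by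
            rw [hh]
            exact Ideal.map_mono (hOR.ohmRushContent_smul_le_span_singleton_mul a h)
        _ = (ohmRushContent R h).map (algebraMap R L) * Ideal.span {algebraMap R L a} := by
            rw [Ideal.map_mul, hspan, mul_comm]
        _ ≤ IsLocalRing.maximalIdeal L • Ideal.span {algebraMap R L a} :=
            Ideal.mul_mono_left (IsLocalRing.le_maximalIdeal htop)
    have hbot : Ideal.span {algebraMap R L a} = ⊥ :=
      Submodule.eq_bot_of_le_smul_of_le_jacobson_bot _ _ (Submodule.fg_span_singleton _) hle
        (IsLocalRing.maximalIdeal_le_jacobson ⊥)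
    rw [hfa, hbot, Ideal.bot_mul]
    exact bot_le

end Algebra

/-- In a semicontent algebra, an element with locally principal content is Gaussian. -/
theorem gaussian_of_locally_principal_content (R S : Type*) [CommRing R] [CommRing S]
    [Algebra R S] (hsc : IsSemicontentAlgebra R S) (f : S)
    (hlp : ∀ m : Ideal R, ∀ _ : m.IsMaximal,
      (Ideal.map (algebraMap R (Localization m.primeCompl)) (ohmRushContent R f)).IsPrincipal) :
    IsGaussianElement R f := by
  intro g
  refine le_antisymm (hsc.2.1.ohmRushContent_mul_le f g)
    (Ideal.le_of_localization_maximal fun m hm => ?_)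
  rw [Ideal.map_mul]
  exact hsc.map_ohmRushContent_mul_le m g (hlp m hm)
end

section
/- Let (R, m) be a local Artinian ring that is not Gorenstein, and let S be a semicontent R-algebra such that every 2-generated ideal of R is the content of some element of S. Then there exists a Gaussian element f ∈ S whose content c(f) is not a principal ideal of R. -/
/-!
The socle `0 :ₘ m` of a local Artinian ring is nonzero, since `m` is nilpotent. Nonzero socle
elements generate the same ideal as each of their nonzero multiples, so if the socle is not
principal it contains `a, b` with `(a, b)` non-principal. An element `f` with `c(f) = (a, b)` is
Gaussian: for `c(g) = R` the semicontent condition at `W = 1` gives `c(fg) = c(f)`, and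
otherwise `c(f) c(g) ⊆ (0 :ₘ m) m = 0`, so `fg ∈ c(f) c(g) S = 0` by the Ohm-Rush property.
-/

open IsLocalRing

theorem ohmRushContent_zero (R M : Type*) [CommRing R] [AddCommGroup M] [Module R M] :
    ohmRushContent R (0 : M) = ⊥ :=
  le_bot_iff.mp (sInf_le (Submodule.zero_mem ((⊥ : Ideal R) • ⊤ : Submodule R M)))

namespace IsOhmRush

variable {R S : Type*} [CommRing R] [CommRing S] [Algebra R S]

theorem mem_map_ohmRushContent (h : IsOhmRush R S) (f : S) :
    f ∈ Ideal.map (algebraMap R S) (ohmRushContent R f) := by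
  simpa only [Ideal.smul_top_eq_map, Submodule.restrictScalars_mem] using h f

theorem mul_eq_zero_of_ohmRushContent_mul_eq_bot (h : IsOhmRush R S) {f g : S}
    (hfg : ohmRushContent R f * ohmRushContent R g = ⊥) : f * g = 0 := by
  have := Ideal.mul_mem_mul (h.mem_map_ohmRushContent f) (h.mem_map_ohmRushContent g)
  rwa [← Ideal.map_mul, hfg, Ideal.map_bot, Ideal.mem_bot] at this

end IsOhmRush

namespace IsSemicontentAlgebra

variable {R S : Type*} [CommRing R] [CommRing S] [Algebra R S]

theorem ohmRushContent_mul_of_ohmRushContent_eq_top (h : IsSemicontentAlgebra R S) {f : S}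
    (hf : ohmRushContent R f = ⊤) (g : S) :
    ohmRushContent R (f * g) = ohmRushContent R g := by
  have hbij : Function.Bijective (algebraMap R (Localization (⊥ : Submonoid R))) := by
    let e := IsLocalization.atUnits R ⊥ (S := Localization (⊥ : Submonoid R)) bot_le
    convert e.bijective
    ext x
    exact (e.commutes x).symm
  have := congrArg (Ideal.comap (algebraMap R (Localization (⊥ : Submonoid R))))
    (h.2.2 ⊥ f g (by rw [hf, Ideal.map_top]))
  rwa [Ideal.comap_map_of_bijective _ hbij, Ideal.comap_map_of_bijective _ hbij] at this

theorem isGaussianElement_of_ohmRushContent_le_annihilator [IsLocalRing R]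
    (h : IsSemicontentAlgebra R S) {f : S}
    (hf : ohmRushContent R f ≤ Submodule.annihilator (maximalIdeal R)) :
    IsGaussianElement R f := by
  intro g
  by_cases hg : ohmRushContent R g = ⊤
  · rw [mul_comm, h.ohmRushContent_mul_of_ohmRushContent_eq_top hg, hg, Ideal.mul_top]
  · have hfg : ohmRushContent R f * ohmRushContent R g = ⊥ :=
      le_bot_iff.mp <| (Ideal.mul_mono hf (le_maximalIdeal hg)).trans_eq
        (Submodule.annihilator_mul _)
    rw [h.2.1.mul_eq_zero_of_ohmRushContent_mul_eq_bot hfg, ohmRushContent_zero, hfg]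

end IsSemicontentAlgebra

theorem Ideal.exists_ne_zero_mem_annihilator_of_isNilpotent {R : Type*} [CommRing R]
    [Nontrivial R] {I : Ideal R} (hI : IsNilpotent I) :
    ∃ x ≠ 0, x ∈ Submodule.annihilator I := by
  obtain ⟨x, hx, hx0⟩ := Submodule.exists_mem_ne_zero_of_ne_bot (pow_pred_nilpotencyClass hI)
  refine ⟨x, hx0, Submodule.mem_annihilator.mpr fun r hr => ?_⟩
  have : x * r ∈ I ^ nilpotencyClass I := by
    rw [← Nat.sub_add_cancel (pos_nilpotencyClass_iff.mpr hI), pow_succ]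
    exact Ideal.mul_mem_mul hx hr
  rw [pow_nilpotencyClass hI, Submodule.zero_eq_bot, Ideal.mem_bot] at this
  exact this

namespace IsLocalRing

variable {R : Type*} [CommRing R] [IsLocalRing R]

theorem span_singleton_eq_of_mem_annihilator_maximalIdeal {a c : R}
    (hc : c ∈ Submodule.annihilator (maximalIdeal R)) (ha : a ≠ 0)
    (hac : a ∈ Ideal.span {c}) : Ideal.span {a} = Ideal.span {c} := by
  obtain ⟨r, rfl⟩ := Ideal.mem_span_singleton'.mp hac
  have hr : IsUnit r := by
    by_contra hr
    exact ha (mul_comm r c ▸ Submodule.mem_annihilator.mp hc r hr)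
  exact Ideal.span_singleton_mul_left_unit hr c

theorem not_isPrincipal_span_pair_of_mem_annihilator_maximalIdeal {a b : R}
    (ha : a ∈ Submodule.annihilator (maximalIdeal R))
    (hb : b ∈ Submodule.annihilator (maximalIdeal R)) (ha0 : a ≠ 0)
    (hba : b ∉ Ideal.span {a}) : ¬ (Ideal.span {a, b}).IsPrincipal := by
  rintro ⟨c, hc⟩
  have hspan : Ideal.span {a, b} = Ideal.span {c} := hc
  have hc_mem : c ∈ Submodule.annihilator (maximalIdeal R) :=
    Ideal.span_le.mpr (Set.insert_subset ha (Set.singleton_subset_iff.mpr hb))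
      (hspan ▸ Ideal.mem_span_singleton_self c)
  have ha_mem : a ∈ Ideal.span {c} := hspan ▸ Ideal.subset_span (Set.mem_insert a {b})
  rw [span_singleton_eq_of_mem_annihilator_maximalIdeal hc_mem ha0 ha_mem, ← hspan] at hba
  exact hba (Ideal.subset_span (Set.mem_insert_of_mem a rfl))

theorem exists_span_pair_le_annihilator_maximalIdeal_not_isPrincipal [IsArtinianRing R]
    (hR : ¬ ∃ x ≠ 0, Submodule.annihilator (maximalIdeal R) = Ideal.span {x}) :
    ∃ a b : R, Ideal.span {a, b} ≤ Submodule.annihilator (maximalIdeal R) ∧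
      ¬ (Ideal.span {a, b}).IsPrincipal := by
  have hm : IsNilpotent (maximalIdeal R) := by
    rw [← jacobson_eq_maximalIdeal ⊥ bot_ne_top]
    exact IsArtinianRing.isNilpotent_jacobson_bot
  obtain ⟨a, ha0, ha⟩ := Ideal.exists_ne_zero_mem_annihilator_of_isNilpotent hm
  obtain ⟨b, hb, hba⟩ : ∃ b ∈ Submodule.annihilator (maximalIdeal R), b ∉ Ideal.span {a} :=
    Set.not_subset.mp fun h =>
      hR ⟨a, ha0, le_antisymm h ((Ideal.span_singleton_le_iff_mem _).mpr ha)⟩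
  exact ⟨a, b, Ideal.span_le.mpr (Set.insert_subset ha (Set.singleton_subset_iff.mpr hb)),
    not_isPrincipal_span_pair_of_mem_annihilator_maximalIdeal ha hb ha0 hba⟩

end IsLocalRing

/-- If `(R,m)` is a local Artinian ring that is not Gorenstein (its socle is not
generated by a single nonzero element) and `S` is a semicontent `R`-algebra such that
every 2-generated ideal of `R` is the content of some element of `S`, then `S` contains
a Gaussian element with non-principal content. -/
theorem exists_gaussian_nonprincipal_content (R S : Type*) [CommRing R] [CommRing S]
    [IsLocalRing R] [Algebra R S]
    (hart : IsArtinianRing R)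
    (hngor : ¬ ∃ x : R, x ≠ 0 ∧
      Submodule.annihilator (IsLocalRing.maximalIdeal R) = Ideal.span {x})
    (hsc : IsSemicontentAlgebra R S)
    (hcont : ∀ a b : R, ∃ f : S, ohmRushContent R f = Ideal.span {a, b}) :
    ∃ f : S, IsGaussianElement R f ∧ ¬ (ohmRushContent R f).IsPrincipal := by
  obtain ⟨a, b, hsocle, hnp⟩ :=
    IsLocalRing.exists_span_pair_le_annihilator_maximalIdeal_not_isPrincipal (R := R) hngor
  obtain ⟨f, hf⟩ := hcont a b
  exact ⟨f, hsc.isGaussianElement_of_ohmRushContent_le_annihilator (hf ▸ hsocle), hf ▸ hnp⟩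
end
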